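/- arXiv:2011.14238 — 4 statements merged into one kernel-verified Lean document; each statement's English description precedes it below -/
import Mathlib

section
/- Training-data conditional mean update (intermediate identity in the proof of Lemma 1, item 6): Under the leave-cluster-out setup, assume V and V₋ are well defined (i.e., τ⁻²G + D and τ⁻²X₋ᵀX₋ + D are invertible) and c·ν ≠ 1. Then τ⁻²·V₋·X₋ᵀY₋ = τ⁻²·V·g + (c·ē/(1 − c·ν))·V·x. -/
open Matrix

/-!
Dropping the held-out cluster is a rank-one downdate, `V₋⁻¹ = V⁻¹ - c x xᵀ`, and the training
cross-product is `τ⁻² X₋ᵀY₋ = τ⁻² g - c ȳ x`. The Sherman–Morrison formula applied to this vector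
gives `V₋` times it in terms of `V`; the two `ȳ` contributions then combine into the residual `ē`.
-/

theorem sherman_morrison_mulVec {K n : Type*} [Field K] [Fintype n] [DecidableEq n]
    {A V W : Matrix n n K} (u v w : n → K) (hAV : A * V = 1) (hW : W * (A - vecMulVec u v) = 1)
    (hv : v ⬝ᵥ V *ᵥ u ≠ 1) :
    W *ᵥ w = V *ᵥ w + ((v ⬝ᵥ V *ᵥ w) / (1 - v ⬝ᵥ V *ᵥ u)) • V *ᵥ u := by
  set k := (v ⬝ᵥ V *ᵥ w) / (1 - v ⬝ᵥ V *ᵥ u)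
  have hk : k - (v ⬝ᵥ V *ᵥ w + k * v ⬝ᵥ V *ᵥ u) = 0 := by
    have : 1 - v ⬝ᵥ V *ᵥ u ≠ 0 := sub_ne_zero.mpr hv.symm
    simp only [k]
    field_simp
    ring
  have hsolves : (A - vecMulVec u v) *ᵥ (V *ᵥ w + k • V *ᵥ u) = w := by
    rw [sub_mulVec, vecMulVec_mulVec]
    simp only [mulVec_add, mulVec_smul, mulVec_mulVec, hAV, one_mulVec, dotProduct_add,
      dotProduct_smul, smul_eq_mul, op_smul_eq_smul]
    linear_combination (norm := module) hk • u
  calc W *ᵥ w = W *ᵥ ((A - vecMulVec u v) *ᵥ (V *ᵥ w + k • V *ᵥ u)) := by rw [hsolves]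
    _ = V *ᵥ w + k • V *ᵥ u := by rw [mulVec_mulVec, hW, one_mulVec]

theorem training_conditional_mean_update_general {P M n : ℕ}
    (τ : ℝ)
    (D : Matrix (Fin P) (Fin P) ℝ)
    (Xm : Matrix (Fin M) (Fin P) ℝ) (Ym : Fin M → ℝ)
    (x : Fin P → ℝ) (ybar : ℝ)
    (G : Matrix (Fin P) (Fin P) ℝ)
    (hG : G = Xmᵀ * Xm + (n : ℝ) • Matrix.vecMulVec x x)
    (g : Fin P → ℝ) (hg : g = Xmᵀ *ᵥ Ym + ((n : ℝ) * ybar) • x)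
    (V Vm : Matrix (Fin P) (Fin P) ℝ)
    (hV : V = ((τ ^ 2)⁻¹ • G + D)⁻¹)
    (hVm : Vm = ((τ ^ 2)⁻¹ • (Xmᵀ * Xm) + D)⁻¹)
    (hVinv : IsUnit ((τ ^ 2)⁻¹ • G + D).det)
    (hVminv : IsUnit ((τ ^ 2)⁻¹ • (Xmᵀ * Xm) + D).det)
    (c ν ytil ebar : ℝ)
    (hc : c = (n : ℝ) / τ ^ 2) (hν : ν = x ⬝ᵥ V *ᵥ x)
    (hyt : ytil = (τ ^ 2)⁻¹ * (x ⬝ᵥ V *ᵥ g)) (heb : ebar = ytil - ybar)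
    (hcν : c * ν ≠ 1) :
    (τ ^ 2)⁻¹ • (Vm *ᵥ (Xmᵀ *ᵥ Ym)) =
      (τ ^ 2)⁻¹ • (V *ᵥ g) + ((c * ebar) / (1 - c * ν)) • (V *ᵥ x) := by
  have hdowndate : (τ ^ 2)⁻¹ • (Xmᵀ * Xm) + D = (τ ^ 2)⁻¹ • G + D - vecMulVec (c • x) x := by
    rw [hG, hc, smul_vecMulVec, smul_add, smul_smul, div_eq_inv_mul]
    abel
  have hAV : ((τ ^ 2)⁻¹ • G + D) * V = 1 := hV ▸ mul_nonsing_inv _ hVinv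
  have hVmB : Vm * ((τ ^ 2)⁻¹ • G + D - vecMulVec (c • x) x) = 1 :=
    hdowndate ▸ hVm ▸ nonsing_inv_mul _ hVminv
  have hcross : (τ ^ 2)⁻¹ • (Xmᵀ *ᵥ Ym) = (τ ^ 2)⁻¹ • g - (c * ybar) • x := by
    rw [hg, hc]
    module
  have hνc : x ⬝ᵥ V *ᵥ (c • x) = c * ν := by rw [mulVec_smul, dotProduct_smul, hν, smul_eq_mul]
  rw [← mulVec_smul, hcross, sherman_morrison_mulVec _ x _ hAV hVmB (hνc ▸ hcν), hνc]
  simp only [mulVec_sub, mulVec_smul, dotProduct_sub, dotProduct_smul, ← hν, smul_eq_mul]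
  rw [← hyt, heb]
  have hden : 1 - c * ν ≠ 0 := sub_ne_zero.mpr hcν.symm
  match_scalars
  · ring
  · field_simp
    ring

/-- Training-data conditional mean update (intermediate identity in the proof of Lemma 1,
item 6): Under the leave-cluster-out setup, assume `V` and `V₋` are well defined (i.e.,
`τ⁻²G + D` and `τ⁻²X₋ᵀX₋ + D` are invertible) and `c·ν ≠ 1`. Then
`τ⁻²·V₋·X₋ᵀY₋ = τ⁻²·V·g + (c·ē/(1 − c·ν))·V·x`. -/
theorem training_conditional_mean_update {P M n : ℕ} (hn : 0 < n)
    (τ : ℝ) (hτ : 0 < τ)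
    (D : Matrix (Fin P) (Fin P) ℝ) (hD : D.IsSymm)
    (Xm : Matrix (Fin M) (Fin P) ℝ) (Ym : Fin M → ℝ)
    (x : Fin P → ℝ) (ybar : ℝ)
    (G : Matrix (Fin P) (Fin P) ℝ)
    (hG : G = Xmᵀ * Xm + (n : ℝ) • Matrix.vecMulVec x x)
    (g : Fin P → ℝ) (hg : g = Xmᵀ *ᵥ Ym + ((n : ℝ) * ybar) • x)
    (V Vm : Matrix (Fin P) (Fin P) ℝ)
    (hV : V = ((τ ^ 2)⁻¹ • G + D)⁻¹)
    (hVm : Vm = ((τ ^ 2)⁻¹ • (Xmᵀ * Xm) + D)⁻¹)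
    (hVinv : IsUnit ((τ ^ 2)⁻¹ • G + D).det)
    (hVminv : IsUnit ((τ ^ 2)⁻¹ • (Xmᵀ * Xm) + D).det)
    (c ν ytil ebar : ℝ)
    (hc : c = (n : ℝ) / τ ^ 2) (hν : ν = x ⬝ᵥ V *ᵥ x)
    (hyt : ytil = (τ ^ 2)⁻¹ * (x ⬝ᵥ V *ᵥ g)) (heb : ebar = ytil - ybar)
    (hcν : c * ν ≠ 1) :
    (τ ^ 2)⁻¹ • (Vm *ᵥ (Xmᵀ *ᵥ Ym)) =
      (τ ^ 2)⁻¹ • (V *ᵥ g) + ((c * ebar) / (1 - c * ν)) • (V *ᵥ x) :=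
  training_conditional_mean_update_general τ D Xm Ym x ybar G hG g hg V Vm hV hVm hVinv hVminv c ν
    ytil ebar hc hν hyt heb hcν
end

section
/- Quadratic-form decomposition for the training data (Lemma 1, item 6): Under the leave-cluster-out setup, assume V and V₋ are well defined (i.e., τ⁻²G + D and τ⁻²X₋ᵀX₋ + D are invertible) and c·ν ≠ 1. Then τ⁻⁴·(X₋ᵀY₋)ᵀ V₋ (X₋ᵀY₋) = τ⁻⁴·gᵀVg − c·ȳ² + c·ē²/(1 − c·ν). -/
open Matrix

lemma mul_vecMulVec' {P : ℕ} (A : Matrix (Fin P) (Fin P) ℝ) (a b : Fin P → ℝ) :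
    A * vecMulVec a b = vecMulVec (A *ᵥ a) b := by
  ext i j
  simp only [mul_apply, vecMulVec_apply, mulVec, dotProduct, Finset.sum_mul]
  exact Finset.sum_congr rfl fun _ _ => by ring

lemma vecMulVec_mul' {P : ℕ} (A : Matrix (Fin P) (Fin P) ℝ) (a b : Fin P → ℝ) :
    vecMulVec a b * A = vecMulVec a (Aᵀ *ᵥ b) := by
  ext i j
  simp only [mul_apply, vecMulVec_apply, mulVec, dotProduct, Finset.mul_sum, transpose_apply]
  exact Finset.sum_congr rfl fun _ _ => by ring

lemma vecMulVec_mulVec' {P : ℕ} (a b u : Fin P → ℝ) :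
    vecMulVec a b *ᵥ u = (b ⬝ᵥ u) • a := by
  ext i
  simp only [vecMulVec_apply, mulVec, dotProduct, Finset.sum_mul, Pi.smul_apply, smul_eq_mul]
  exact Finset.sum_congr rfl fun _ _ => by ring

lemma vecMulVec_mul_vecMulVec' {P : ℕ} (a b u v : Fin P → ℝ) :
    vecMulVec a b * vecMulVec u v = (b ⬝ᵥ u) • vecMulVec a v := by
  ext i j
  simp only [mul_apply, vecMulVec_apply, dotProduct, Matrix.smul_apply, smul_eq_mul, Finset.mul_sum]
  rw [Finset.sum_mul]
  exact Finset.sum_congr rfl fun _ _ => by ring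

/-- Quadratic-form decomposition for the training data (Lemma 1, item 6): Under the
leave-cluster-out setup, assume `V` and `V₋` are well defined and `c·ν ≠ 1`. Then
`τ⁻⁴·(X₋ᵀY₋)ᵀ V₋ (X₋ᵀY₋) = τ⁻⁴·gᵀVg − c·ȳ² + c·ē²/(1 − c·ν)`. -/
theorem training_quadratic_form_decomposition {P M n : ℕ} (hn : 0 < n)
    (τ : ℝ) (hτ : 0 < τ)
    (D : Matrix (Fin P) (Fin P) ℝ) (hD : D.IsSymm)
    (Xm : Matrix (Fin M) (Fin P) ℝ) (Ym : Fin M → ℝ)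
    (x : Fin P → ℝ) (ybar : ℝ)
    (G : Matrix (Fin P) (Fin P) ℝ)
    (hG : G = Xmᵀ * Xm + (n : ℝ) • Matrix.vecMulVec x x)
    (g : Fin P → ℝ) (hg : g = Xmᵀ *ᵥ Ym + ((n : ℝ) * ybar) • x)
    (V Vm : Matrix (Fin P) (Fin P) ℝ)
    (hV : V = ((τ ^ 2)⁻¹ • G + D)⁻¹)
    (hVm : Vm = ((τ ^ 2)⁻¹ • (Xmᵀ * Xm) + D)⁻¹)
    (hVinv : IsUnit ((τ ^ 2)⁻¹ • G + D).det)
    (hVminv : IsUnit ((τ ^ 2)⁻¹ • (Xmᵀ * Xm) + D).det)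
    (c ν ytil ebar : ℝ)
    (hc : c = (n : ℝ) / τ ^ 2) (hν : ν = x ⬝ᵥ V *ᵥ x)
    (hyt : ytil = (τ ^ 2)⁻¹ * (x ⬝ᵥ V *ᵥ g)) (heb : ebar = ytil - ybar)
    (hcν : c * ν ≠ 1) :
    (τ ^ 4)⁻¹ * ((Xmᵀ *ᵥ Ym) ⬝ᵥ Vm *ᵥ (Xmᵀ *ᵥ Ym)) =
      (τ ^ 4)⁻¹ * (g ⬝ᵥ V *ᵥ g) - c * ybar ^ 2 + c * ebar ^ 2 / (1 - c * ν) := by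
  have hτ2 : (τ : ℝ) ≠ 0 := ne_of_gt hτ
  set A : Matrix (Fin P) (Fin P) ℝ := (τ ^ 2)⁻¹ • G + D with hA
  -- basic inverse facts
  have hAV : A * V = 1 := by rw [hV]; exact mul_nonsing_inv A hVinv
  have hVA : V * A = 1 := by rw [hV]; exact nonsing_inv_mul A hVinv
  -- symmetry
  have hGs : Gᵀ = G := by
    rw [hG, transpose_add, transpose_smul, transpose_mul, transpose_transpose]
    congr 1
    ext i j
    simp [vecMulVec_apply, mul_comm]
  have hAs : Aᵀ = A := by rw [hA, transpose_add, transpose_smul, hGs, hD.eq]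
  have hVs : Vᵀ = V := by rw [hV, transpose_nonsing_inv, hAs]
  -- B = A - c • x xᵀ
  have hB : (τ ^ 2)⁻¹ • (Xmᵀ * Xm) + D = A - c • vecMulVec x x := by
    have hcc : c = (τ ^ 2)⁻¹ * (n : ℝ) := by rw [hc]; ring
    rw [hcc, hA, hG, smul_add, smul_smul]
    abel
  -- Sherman-Morrison
  set k : ℝ := c / (1 - c * ν) with hk
  set w : Fin P → ℝ := V *ᵥ x with hw
  have hAw : A *ᵥ w = x := by
    rw [hw, mulVec_mulVec, hAV, one_mulVec]
  have hxw : x ⬝ᵥ w = ν := hν.symm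
  have hd : (1 : ℝ) - c * ν ≠ 0 := fun h => hcν (by linarith)
  have hBW : ((τ ^ 2)⁻¹ • (Xmᵀ * Xm) + D) * (V + k • vecMulVec w w) = 1 := by
    rw [hB, sub_mul, mul_add, mul_add, Matrix.mul_smul, Matrix.mul_smul,
      Matrix.smul_mul, Matrix.smul_mul, hAV, mul_vecMulVec', hAw,
      vecMulVec_mul' V x x, hVs, vecMulVec_mul_vecMulVec', hxw, ← hw]
    have hcomb : c • vecMulVec x w + k • c • ν • vecMulVec x w = k • vecMulVec x w := by
      rw [smul_smul, smul_smul, ← add_smul]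
      congr 1
      rw [hk]; field_simp; ring
    rw [hcomb, add_sub_cancel_right]
  have hWm : Vm = V + k • vecMulVec w w := by
    rw [hVm]; exact inv_eq_right_inv hBW
  -- scalar reductions
  have hsym : ∀ a b : Fin P → ℝ, a ⬝ᵥ V *ᵥ b = b ⬝ᵥ V *ᵥ a := by
    intro a b
    calc a ⬝ᵥ V *ᵥ b = (Vᵀ *ᵥ a) ⬝ᵥ b := by rw [dotProduct_mulVec, mulVec_transpose]
      _ = b ⬝ᵥ V *ᵥ a := by rw [hVs, dotProduct_comm]
  set u : Fin P → ℝ := Xmᵀ *ᵥ Ym with hu0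
  have hu : u = g - ((n : ℝ) * ybar) • x := by rw [hg]; abel
  have hWu : u ⬝ᵥ Vm *ᵥ u = u ⬝ᵥ V *ᵥ u + k * (u ⬝ᵥ V *ᵥ x) ^ 2 := by
    rw [hWm, add_mulVec, smul_mulVec, vecMulVec_mulVec', dotProduct_add]
    simp only [dotProduct_smul, smul_eq_mul]
    rw [dotProduct_comm w u, show (u ⬝ᵥ w) = u ⬝ᵥ V *ᵥ x from rfl]
    ring
  have e1 : u ⬝ᵥ V *ᵥ x = x ⬝ᵥ V *ᵥ g - (n : ℝ) * ybar * ν := by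
    rw [hu, sub_dotProduct, smul_dotProduct, hsym g x, ← hν, smul_eq_mul]
  have e2 : u ⬝ᵥ V *ᵥ u
      = g ⬝ᵥ V *ᵥ g - 2 * ((n : ℝ) * ybar) * (x ⬝ᵥ V *ᵥ g) + ((n : ℝ) * ybar) ^ 2 * ν := by
    rw [hu]
    simp only [mulVec_sub, mulVec_smul, sub_dotProduct, dotProduct_sub, smul_dotProduct,
      dotProduct_smul, smul_eq_mul]
    rw [hsym g x, ← hν]
    ring
  have hn' : (n : ℝ) = c * τ ^ 2 := by rw [hc]; field_simp
  rw [hWu, e1, e2, heb, hyt, hn', hk]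
  field_simp
  ring
end

section
/- Difference of the profiled log marginal likelihoods (Lemma 2): Under the leave-cluster-out setup, define for the full data L := −(M+n)·log τ + (1/2)·log det V + (1/(2τ⁴))·gᵀVg and for the training data L₋ := −M·log τ + (1/2)·log det V₋ + (1/(2τ⁴))·(X₋ᵀY₋)ᵀV₋(X₋ᵀY₋). If V and V₋ are well defined, det V > 0, and 0 < 1 − c·ν, then L₋ − L = n·log τ − (1/2)·log(1 − c·ν) − (c/2)·ȳ² + (c/2)·ē²/(1 − c·ν). -/
open Matrix

set_option linter.unusedSectionVars false
set_option maxHeartbeats 1000000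

open Matrix

section Aux
variable {m : Type*} [Fintype m] [DecidableEq m]

lemma mul_vecMulVec'_s9 (A : Matrix m m ℝ) (u v : m → ℝ) :
    A * vecMulVec u v = vecMulVec (A *ᵥ u) v := by
  ext i j
  simp [Matrix.mul_apply, vecMulVec_apply, mulVec, dotProduct, Finset.sum_mul, mul_assoc]

lemma vecMulVec_mul'_s9 (u v : m → ℝ) (A : Matrix m m ℝ) :
    vecMulVec u v * A = vecMulVec u (Aᵀ *ᵥ v) := by
  ext i j
  simp [Matrix.mul_apply, vecMulVec_apply, mulVec, dotProduct, Finset.mul_sum, transpose_apply]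
  ring_nf
  congr 1; ext k; ring

lemma vecMulVec_mulVec'_s9 (u v w : m → ℝ) :
    vecMulVec u v *ᵥ w = (v ⬝ᵥ w) • u := by
  ext i
  simp only [vecMulVec_apply, mulVec, dotProduct, Pi.smul_apply, smul_eq_mul]
  rw [Finset.sum_mul]
  exact Finset.sum_congr rfl fun k _ => by ring

lemma vecMulVec_mul_vecMulVec'_s9 (u v s t : m → ℝ) :
    vecMulVec u v * vecMulVec s t = (v ⬝ᵥ s) • vecMulVec u t := by
  ext i j
  simp only [Matrix.mul_apply, vecMulVec_apply, Matrix.smul_apply, smul_eq_mul, dotProduct]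
  rw [Finset.sum_mul]
  exact Finset.sum_congr rfl fun l _ => by ring

lemma smul_vecMulVec' (a : ℝ) (u v : m → ℝ) :
    a • vecMulVec u v = vecMulVec (a • u) v := by
  ext i j; simp [vecMulVec_apply, mul_assoc]
end Aux

/-- Difference of the profiled log marginal likelihoods (Lemma 2): Under the
leave-cluster-out setup, with
`L = −(M+n)·log τ + (1/2)·log det V + (1/(2τ⁴))·gᵀVg` and
`L₋ = −M·log τ + (1/2)·log det V₋ + (1/(2τ⁴))·(X₋ᵀY₋)ᵀV₋(X₋ᵀY₋)`,
if `V` and `V₋` are well defined, `det V > 0`, and `0 < 1 − c·ν`, then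
`L₋ − L = n·log τ − (1/2)·log(1 − c·ν) − (c/2)·ȳ² + (c/2)·ē²/(1 − c·ν)`. -/
theorem profiled_loglik_difference {P M n : ℕ} (hn : 0 < n)
    (τ : ℝ) (hτ : 0 < τ)
    (D : Matrix (Fin P) (Fin P) ℝ) (hD : D.IsSymm)
    (Xm : Matrix (Fin M) (Fin P) ℝ) (Ym : Fin M → ℝ)
    (x : Fin P → ℝ) (ybar : ℝ)
    (G : Matrix (Fin P) (Fin P) ℝ)
    (hG : G = Xmᵀ * Xm + (n : ℝ) • Matrix.vecMulVec x x)
    (g : Fin P → ℝ) (hg : g = Xmᵀ *ᵥ Ym + ((n : ℝ) * ybar) • x)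
    (V Vm : Matrix (Fin P) (Fin P) ℝ)
    (hV : V = ((τ ^ 2)⁻¹ • G + D)⁻¹)
    (hVm : Vm = ((τ ^ 2)⁻¹ • (Xmᵀ * Xm) + D)⁻¹)
    (hVinv : IsUnit ((τ ^ 2)⁻¹ • G + D).det)
    (hVminv : IsUnit ((τ ^ 2)⁻¹ • (Xmᵀ * Xm) + D).det)
    (c ν ytil ebar : ℝ)
    (hc : c = (n : ℝ) / τ ^ 2) (hν : ν = x ⬝ᵥ V *ᵥ x)
    (hyt : ytil = (τ ^ 2)⁻¹ * (x ⬝ᵥ V *ᵥ g)) (heb : ebar = ytil - ybar)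
    (hdet : 0 < V.det) (hcν : 0 < 1 - c * ν)
    (L Lm : ℝ)
    (hL : L = -((M : ℝ) + (n : ℝ)) * Real.log τ + (1 / 2) * Real.log V.det +
      (1 / (2 * τ ^ 4)) * (g ⬝ᵥ V *ᵥ g))
    (hLm : Lm = -(M : ℝ) * Real.log τ + (1 / 2) * Real.log Vm.det +
      (1 / (2 * τ ^ 4)) * ((Xmᵀ *ᵥ Ym) ⬝ᵥ Vm *ᵥ (Xmᵀ *ᵥ Ym))) :
    Lm - L = (n : ℝ) * Real.log τ - (1 / 2) * Real.log (1 - c * ν) -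
      (c / 2) * ybar ^ 2 + (c / 2) * ebar ^ 2 / (1 - c * ν) := by

  have hτ2 : (τ : ℝ) ^ 2 ≠ 0 := by positivity
  have hcν' : (1 : ℝ) - c * ν ≠ 0 := ne_of_gt hcν
  set A : Matrix (Fin P) (Fin P) ℝ := (τ ^ 2)⁻¹ • G + D with hA
  set B : Matrix (Fin P) (Fin P) ℝ := (τ ^ 2)⁻¹ • (Xmᵀ * Xm) + D with hB
  -- B = A - c • x xᵀ
  have hBA : B = A - c • vecMulVec x x := by
    rw [hB, hA, hG, hc]
    ext i j
    simp only [Matrix.add_apply, Matrix.sub_apply, Matrix.smul_apply, vecMulVec_apply,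
      smul_eq_mul]
    field_simp
    ring
  have hAV : A * V = 1 := by rw [hV]; exact mul_nonsing_inv _ hVinv
  have hVA : V * A = 1 := by rw [hV]; exact nonsing_inv_mul _ hVinv
  -- symmetry
  have hAs : Aᵀ = A := by
    rw [hA, transpose_add, transpose_smul, hD.eq, hG, transpose_add, transpose_smul,
      transpose_mul, transpose_transpose]
    congr 2
    ext i j; simp [vecMulVec_apply, mul_comm]
  have hVs : Vᵀ = V := by
    rw [hV, transpose_nonsing_inv, hAs]
  -- symmetric dot product
  have hdot : ∀ u w : Fin P → ℝ, u ⬝ᵥ V *ᵥ w = w ⬝ᵥ V *ᵥ u := by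
    intro u w
    rw [Matrix.dotProduct_mulVec, ← Matrix.mulVec_transpose, hVs, dotProduct_comm]
  set k : ℝ := c / (1 - c * ν) with hk
  have hk1 : k * (1 - c * ν) = c := div_mul_cancel₀ _ hcν'
  set w : Fin P → ℝ := V *ᵥ x with hw
  have hAw : A *ᵥ w = x := by
    rw [hw, Matrix.mulVec_mulVec, hAV, Matrix.one_mulVec]
  have hxw : x ⬝ᵥ w = ν := by rw [hw, hν]
  -- Sherman–Morrison
  have hW1 : B * (V + k • vecMulVec w w) = 1 := by
    have e1 : A * (k • vecMulVec w w) = k • vecMulVec x w := by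
      rw [Matrix.mul_smul, mul_vecMulVec'_s9, hAw]
    have e2 : (c • vecMulVec x x) * V = c • vecMulVec x w := by
      rw [Matrix.smul_mul, vecMulVec_mul'_s9 x x V, hVs, ← hw]
    have e3 : (c • vecMulVec x x) * (k • vecMulVec w w)
        = (c * (k * ν)) • vecMulVec x w := by
      rw [Matrix.smul_mul, Matrix.mul_smul, vecMulVec_mul_vecMulVec'_s9, hxw,
        smul_smul, smul_smul, mul_assoc]
    have hcoef : k - c - c * (k * ν) = 0 := by nlinarith [hk1]
    have : B * (V + k • vecMulVec w w)
        = 1 + (k - c - c * (k * ν)) • vecMulVec x w := by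
      rw [hBA, Matrix.sub_mul, Matrix.mul_add, Matrix.mul_add, hAV, e1, e2, e3]
      module
    rw [this, hcoef, zero_smul, add_zero]
  have hVmW : Vm = V + k • vecMulVec w w := by
    rw [hVm]; exact inv_eq_right_inv hW1
  -- determinant
  have hdetA : A.det ≠ 0 := hVinv.ne_zero
  have hdetVA : V.det = A.det⁻¹ := by
    rw [hV, Matrix.det_nonsing_inv, Ring.inverse_eq_inv']
  have hfac : A * (1 - c • vecMulVec w x) = B := by
    rw [Matrix.mul_sub, Matrix.mul_one, Matrix.mul_smul, mul_vecMulVec'_s9, hAw, hBA]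
  have hdet1 : (1 - c • vecMulVec w x : Matrix (Fin P) (Fin P) ℝ).det = 1 - c * ν := by
    have h1 : (1 - c • vecMulVec w x : Matrix (Fin P) (Fin P) ℝ)
        = 1 + replicateCol Unit ((-c) • w) * replicateRow Unit x := by
      rw [← vecMulVec_eq Unit, ← smul_vecMulVec']
      rw [sub_eq_add_neg, ← neg_smul]
    rw [h1, det_one_add_replicateCol_mul_replicateRow, dotProduct_smul, hxw, smul_eq_mul]
    ring
  have hdetB : B.det = A.det * (1 - c * ν) := by
    rw [← hfac, Matrix.det_mul, hdet1]
  have hdetVm : Vm.det = V.det / (1 - c * ν) := by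
    rw [hVm, Matrix.det_nonsing_inv, Ring.inverse_eq_inv']
    rw [hB] at hdetB ⊢
    rw [hdetB, mul_inv, hdetVA, div_eq_mul_inv]
  have hlog : Real.log Vm.det = Real.log V.det - Real.log (1 - c * ν) := by
    rw [hdetVm, Real.log_div (ne_of_gt hdet) hcν']
  -- quadratic forms
  set gm : Fin P → ℝ := Xmᵀ *ᵥ Ym with hgm
  have hgmg : gm = g - ((n : ℝ) * ybar) • x := by rw [hg]; abel
  set t : ℝ := x ⬝ᵥ V *ᵥ g with ht
  have hwg : w ⬝ᵥ g = t := by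
    rw [hw, dotProduct_comm, hdot g x, ht]
  have hwx : w ⬝ᵥ x = ν := by rw [dotProduct_comm, hxw]
  have hwgm : w ⬝ᵥ gm = t - (n : ℝ) * ybar * ν := by
    rw [hgmg, dotProduct_sub, hwg, dotProduct_smul, hwx, smul_eq_mul]
  have hgmVgm : gm ⬝ᵥ V *ᵥ gm
      = g ⬝ᵥ V *ᵥ g - 2 * ((n : ℝ) * ybar) * t + ((n : ℝ) * ybar) ^ 2 * ν := by
    rw [hgmg, Matrix.mulVec_sub, Matrix.mulVec_smul, dotProduct_sub, sub_dotProduct,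
      sub_dotProduct, dotProduct_smul, dotProduct_smul, smul_dotProduct, smul_dotProduct]
    have e1 : x ⬝ᵥ V *ᵥ g = t := ht.symm
    have e2 : g ⬝ᵥ V *ᵥ x = t := by rw [hdot g x, ht]
    have e3 : x ⬝ᵥ V *ᵥ x = ν := hν.symm
    rw [e1, e2, e3]
    simp only [smul_eq_mul]
    ring
  have hQ : gm ⬝ᵥ Vm *ᵥ gm
      = gm ⬝ᵥ V *ᵥ gm + k * (t - (n : ℝ) * ybar * ν) ^ 2 := by
    rw [hVmW, Matrix.add_mulVec, dotProduct_add, smul_mulVec, vecMulVec_mulVec'_s9,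
      dotProduct_smul, dotProduct_smul, hwgm, smul_eq_mul, smul_eq_mul,
      dotProduct_comm gm w, hwgm]
    ring
  -- scalar relations
  have hnτ : (n : ℝ) = c * τ ^ 2 := by rw [hc]; field_simp
  have htyt : t = τ ^ 2 * ytil := by rw [hyt, ht]; field_simp
  -- assemble
  rw [hLm, hL, hlog, hQ, hgmVgm, heb, htyt, hnτ, hk]
  have hτ4 : (τ : ℝ) ^ 4 ≠ 0 := by positivity
  field_simp [hcν']
  ring
end

section
/- Directional derivative of the log-likelihood difference Δ with respect to the random-effects covariance (key identity in the proof of Theorem 1): Fix x ∈ ℝ^P, w ∈ ℝ^P, B ∈ ℝ^{P₂×P}, M₀ ∈ ℝ^{P×P}, reals τ > 0, c > 0, ȳ. For invertible Σ with M₀ + BᵀΣ⁻¹B invertible, set V(Σ) := (M₀ + BᵀΣ⁻¹B)⁻¹, ν(Σ) := xᵀV(Σ)x, ỹ(Σ) := τ⁻²·xᵀV(Σ)w, ē(Σ) := ỹ(Σ) − ȳ, and Δ(Σ) := −(1/2)·log(1 − c·ν(Σ)) + (c/2)·ē(Σ)²/(1 − c·ν(Σ)). Let Σ₀ be an invertible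 matrix with V₀ := V(Σ₀) defined and c·ν(Σ₀) < 1. Then Δ is Fréchet differentiable at Σ₀, and for any direction H ∈ ℝ^{P₂×P₂}, its derivative equals (c/(1 − c·ν))·[ (1/2)·(1 + c·ē²/(1 − c·ν))·D_Hν + ē·D_Hỹ ], where ν, ỹ, ē are evaluated at Σ₀, D_Hν = xᵀV₀BᵀΣ₀⁻¹HΣ₀⁻¹BV₀x, and D_Hỹ = τ⁻²·xᵀV₀BᵀΣ₀⁻¹HΣ₀⁻¹BV₀w. -/
open Matrix
attribute [local instance] Matrix.normedAddCommGroup Matrix.normedSpace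
section Aux
variable {a b : ℕ}
def entryLM (p : Fin a) (q : Fin b) : Matrix (Fin a) (Fin b) ℝ →ₗ[ℝ] ℝ where
  toFun M := M p q
  map_add' _ _ := rfl
  map_smul' _ _ := rfl
theorem differentiable_entry (p : Fin a) (q : Fin b) :
    Differentiable ℝ (fun M : Matrix (Fin a) (Fin b) ℝ => M p q) :=
  (LinearMap.toContinuousLinearMap (entryLM p q)).differentiable
theorem differentiable_det :
    Differentiable ℝ (fun M : Matrix (Fin a) (Fin a) ℝ => M.det) := by
  simp only [Matrix.det_apply']
  apply Differentiable.fun_sum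
  intro σ _
  apply Differentiable.const_mul
  intro M
  exact HasFDerivAt.finset_prod
    (fun i _ => ((differentiable_entry (σ i) i) M).hasFDerivAt) |>.differentiableAt
def updateRowLM (j : Fin a) : Matrix (Fin a) (Fin b) ℝ →ₗ[ℝ] Matrix (Fin a) (Fin b) ℝ where
  toFun M := M.updateRow j 0
  map_add' M N := by
    ext i q
    by_cases h : i = j <;> simp [Matrix.updateRow_apply, h]
  map_smul' r M := by
    ext i q
    by_cases h : i = j <;> simp [Matrix.updateRow_apply, h]
theorem differentiable_updateRow (j : Fin a) (v : Fin b → ℝ) :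
    Differentiable ℝ (fun M : Matrix (Fin a) (Fin b) ℝ => M.updateRow j v) := by
  have : (fun M : Matrix (Fin a) (Fin b) ℝ => M.updateRow j v)
      = fun M => (0 : Matrix (Fin a) (Fin b) ℝ).updateRow j v + updateRowLM j M := by
    funext M
    ext i q
    by_cases h : i = j <;> simp [Matrix.updateRow_apply, h, updateRowLM]
  rw [this]
  exact (differentiable_const _).add (LinearMap.toContinuousLinearMap (updateRowLM j)).differentiable
theorem differentiable_adjugate :
    Differentiable ℝ (fun M : Matrix (Fin a) (Fin a) ℝ => M.adjugate) := by
  refine (differentiable_pi (𝕜 := ℝ)).2 fun i => ?_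
  refine (differentiable_pi (𝕜 := ℝ)).2 fun j => ?_
  have : (fun M : Matrix (Fin a) (Fin a) ℝ => M.adjugate i j)
      = fun M => (M.updateRow j (Pi.single i 1)).det := by
    funext M; exact Matrix.adjugate_apply M i j
  rw [this]
  exact differentiable_det.comp (differentiable_updateRow j _)
theorem differentiable_inv_at (A : Matrix (Fin a) (Fin a) ℝ) (h : IsUnit A.det) :
    DifferentiableAt ℝ (fun M : Matrix (Fin a) (Fin a) ℝ => M⁻¹) A := by
  have : (fun M : Matrix (Fin a) (Fin a) ℝ => M⁻¹)
      = fun M => (Ring.inverse M.det) • M.adjugate := by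
    funext M; rw [Matrix.inv_def]
  rw [this]
  have hd : A.det ≠ 0 := IsUnit.ne_zero h
  have h1 : DifferentiableAt ℝ (fun M : Matrix (Fin a) (Fin a) ℝ => Ring.inverse M.det) A := by
    have : (fun M : Matrix (Fin a) (Fin a) ℝ => Ring.inverse M.det)
        =ᶠ[nhds A] fun M => (M.det)⁻¹ := by
      filter_upwards [] with M
      rw [Ring.inverse_eq_inv]
    exact DifferentiableAt.congr_of_eventuallyEq ((differentiable_det A).inv hd) this
  exact h1.smul (differentiable_adjugate A)
end Aux

section Aux2
variable {a b c d : ℕ}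
def sandwichLM (A : Matrix (Fin a) (Fin b) ℝ) (C : Matrix (Fin c) (Fin d) ℝ) :
    Matrix (Fin b) (Fin c) ℝ →ₗ[ℝ] Matrix (Fin a) (Fin d) ℝ where
  toFun M := A * M * C
  map_add' M N := by rw [Matrix.mul_add, Matrix.add_mul]
  map_smul' r M := by rw [Matrix.mul_smul, Matrix.smul_mul]; rfl
noncomputable def sandwichCLM (A : Matrix (Fin a) (Fin b) ℝ) (C : Matrix (Fin c) (Fin d) ℝ) :
    Matrix (Fin b) (Fin c) ℝ →L[ℝ] Matrix (Fin a) (Fin d) ℝ :=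
  LinearMap.toContinuousLinearMap (sandwichLM A C)
@[simp] theorem sandwichCLM_apply (A : Matrix (Fin a) (Fin b) ℝ) (C : Matrix (Fin c) (Fin d) ℝ)
    (M : Matrix (Fin b) (Fin c) ℝ) : sandwichCLM A C M = A * M * C := rfl
noncomputable def mulCLM :
    Matrix (Fin a) (Fin a) ℝ →L[ℝ] Matrix (Fin a) (Fin a) ℝ →L[ℝ] Matrix (Fin a) (Fin a) ℝ :=
  LinearMap.toContinuousLinearMap
    { toFun := fun A => LinearMap.toContinuousLinearMap
        { toFun := fun M => A * M
          map_add' := fun M N => Matrix.mul_add A M N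
          map_smul' := fun r M => by rw [Matrix.mul_smul]; rfl }
      map_add' := fun A C => by ext M : 1; exact Matrix.add_mul A C M
      map_smul' := fun r A => by ext M : 1; dsimp; rw [Matrix.smul_mul]; rfl }
@[simp] theorem mulCLM_apply (A M : Matrix (Fin a) (Fin a) ℝ) : mulCLM A M = A * M := rfl
end Aux2

theorem hasFDerivAt_matrix_inv {a : ℕ} (A₀ : Matrix (Fin a) (Fin a) ℝ) (h : IsUnit A₀.det) :
    HasFDerivAt (fun M : Matrix (Fin a) (Fin a) ℝ => M⁻¹)
      (sandwichCLM (-(A₀⁻¹)) (A₀⁻¹)) A₀ := by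
  have hL' := (differentiable_inv_at A₀ h).hasFDerivAt
  set L' := fderiv ℝ (fun M : Matrix (Fin a) (Fin a) ℝ => M⁻¹) A₀ with hLdef
  have hdet : ∀ᶠ M in nhds A₀, (M : Matrix (Fin a) (Fin a) ℝ).det ≠ 0 := by
    have hc : Continuous fun M : Matrix (Fin a) (Fin a) ℝ => M.det := differentiable_det.continuous
    exact hc.continuousAt.eventually_ne h.ne_zero
  have ev : (fun M : Matrix (Fin a) (Fin a) ℝ => M * M⁻¹) =ᶠ[nhds A₀] fun _ => 1 := by
    filter_upwards [hdet] with M hM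
    exact Matrix.mul_nonsing_inv M (isUnit_iff_ne_zero.mpr hM)
  have hzero : HasFDerivAt (fun M : Matrix (Fin a) (Fin a) ℝ => M * M⁻¹)
      (0 : Matrix (Fin a) (Fin a) ℝ →L[ℝ] Matrix (Fin a) (Fin a) ℝ) A₀ :=
    (hasFDerivAt_const (1 : Matrix (Fin a) (Fin a) ℝ) A₀).congr_of_eventuallyEq ev
  have hmul : HasFDerivAt (fun M : Matrix (Fin a) (Fin a) ℝ => M * M⁻¹)
      ((mulCLM).precompR _ A₀ L' +
        (mulCLM).precompL _ (ContinuousLinearMap.id ℝ _) A₀⁻¹) A₀ :=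
    mulCLM.hasFDerivAt_of_bilinear (hasFDerivAt_id A₀) hL'
  have huniq := hmul.unique hzero
  have key : ∀ H, L' H = -(A₀⁻¹) * H * A₀⁻¹ := by
    intro H
    have h0 : A₀ * L' H + H * A₀⁻¹ = 0 := by
      have := congrArg (fun (T : Matrix (Fin a) (Fin a) ℝ →L[ℝ] Matrix (Fin a) (Fin a) ℝ) => T H) huniq
      exact this
    have h1 : A₀ * L' H = -(H * A₀⁻¹) := by linear_combination (norm := abel) h0
    calc L' H = (A₀⁻¹ * A₀) * L' H := by rw [Matrix.nonsing_inv_mul A₀ h, Matrix.one_mul]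
    _ = A₀⁻¹ * (A₀ * L' H) := by rw [Matrix.mul_assoc]
    _ = A₀⁻¹ * -(H * A₀⁻¹) := by rw [h1]
    _ = -(A₀⁻¹) * H * A₀⁻¹ := by
        simp [Matrix.neg_mul, Matrix.mul_assoc]
  have : sandwichCLM (-(A₀⁻¹)) (A₀⁻¹) = L' := by
    ext H
    rw [sandwichCLM_apply, key]
  rw [this]; exact hL'

section Aux3
variable {a b : ℕ}
def quadLM (x : Fin a → ℝ) (w : Fin b → ℝ) : Matrix (Fin a) (Fin b) ℝ →ₗ[ℝ] ℝ where
  toFun M := x ⬝ᵥ M *ᵥ w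
  map_add' M N := by rw [Matrix.add_mulVec, dotProduct_add]
  map_smul' r M := by
    rw [Matrix.smul_mulVec, dotProduct_smul]
    rfl
noncomputable def quadCLM (x : Fin a → ℝ) (w : Fin b → ℝ) :
    Matrix (Fin a) (Fin b) ℝ →L[ℝ] ℝ :=
  LinearMap.toContinuousLinearMap (quadLM x w)
@[simp] theorem quadCLM_apply (x : Fin a → ℝ) (w : Fin b → ℝ) (M : Matrix (Fin a) (Fin b) ℝ) :
    quadCLM x w M = x ⬝ᵥ M *ᵥ w := rfl
end Aux3

/-- Directional derivative of the log-likelihood difference `Δ` with respect to the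
random-effects covariance (key identity in the proof of Theorem 1): with
`V(Σ) = (M₀ + BᵀΣ⁻¹B)⁻¹`, `ν(Σ) = xᵀV(Σ)x`, `ỹ(Σ) = τ⁻²·xᵀV(Σ)w`, `ē(Σ) = ỹ(Σ) − ȳ`, and
`Δ(Σ) = −(1/2)·log(1 − c·ν(Σ)) + (c/2)·ē(Σ)²/(1 − c·ν(Σ))`, the map `Δ` is Fréchet
differentiable at `S₀` and its derivative in direction `H` equals
`(c/(1 − c·ν))·[(1/2)·(1 + c·ē²/(1 − c·ν))·D_Hν + ē·D_Hỹ]` where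
`D_Hν = xᵀV₀BᵀS₀⁻¹HS₀⁻¹BV₀x` and `D_Hỹ = τ⁻²·xᵀV₀BᵀS₀⁻¹HS₀⁻¹BV₀w`. -/
theorem loglik_difference_fderiv_wrt_covariance {P P₂ : ℕ}
    (x w : Fin P → ℝ) (B : Matrix (Fin P₂) (Fin P) ℝ)
    (M₀ : Matrix (Fin P) (Fin P) ℝ)
    (τ c ybar : ℝ) (hτ : 0 < τ) (hc : 0 < c)
    (S₀ : Matrix (Fin P₂) (Fin P₂) ℝ) (hS₀ : IsUnit S₀.det)
    (hM : IsUnit (M₀ + Bᵀ * S₀⁻¹ * B).det)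
    (V₀ : Matrix (Fin P) (Fin P) ℝ) (hV₀ : V₀ = (M₀ + Bᵀ * S₀⁻¹ * B)⁻¹)
    (ν ytil ebar : ℝ)
    (hν : ν = x ⬝ᵥ V₀ *ᵥ x) (hyt : ytil = (τ ^ 2)⁻¹ * (x ⬝ᵥ V₀ *ᵥ w))
    (heb : ebar = ytil - ybar) (hcν : c * ν < 1) :
    ∃ L : Matrix (Fin P₂) (Fin P₂) ℝ →L[ℝ] ℝ,
      HasFDerivAt
        (fun S : Matrix (Fin P₂) (Fin P₂) ℝ =>
          -(1 / 2) * Real.log (1 - c * (x ⬝ᵥ (M₀ + Bᵀ * S⁻¹ * B)⁻¹ *ᵥ x)) +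
            (c / 2) * ((τ ^ 2)⁻¹ * (x ⬝ᵥ (M₀ + Bᵀ * S⁻¹ * B)⁻¹ *ᵥ w) - ybar) ^ 2 /
              (1 - c * (x ⬝ᵥ (M₀ + Bᵀ * S⁻¹ * B)⁻¹ *ᵥ x))) L S₀ ∧
      ∀ H : Matrix (Fin P₂) (Fin P₂) ℝ,
        L H = (c / (1 - c * ν)) *
          ((1 / 2) * (1 + c * ebar ^ 2 / (1 - c * ν)) *
              (x ⬝ᵥ (V₀ * Bᵀ * S₀⁻¹ * H * S₀⁻¹ * B * V₀) *ᵥ x) +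
            ebar * ((τ ^ 2)⁻¹ * (x ⬝ᵥ (V₀ * Bᵀ * S₀⁻¹ * H * S₀⁻¹ * B * V₀) *ᵥ w))) := by
  -- derivative of S ↦ S⁻¹
  have hInv : HasFDerivAt (fun S : Matrix (Fin P₂) (Fin P₂) ℝ => S⁻¹)
      (sandwichCLM (-(S₀⁻¹)) (S₀⁻¹)) S₀ := hasFDerivAt_matrix_inv S₀ hS₀
  -- derivative of S ↦ M₀ + Bᵀ S⁻¹ B
  have hMder : HasFDerivAt (fun S : Matrix (Fin P₂) (Fin P₂) ℝ => M₀ + Bᵀ * S⁻¹ * B)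
      ((sandwichCLM Bᵀ B).comp (sandwichCLM (-(S₀⁻¹)) (S₀⁻¹))) S₀ := by
    have h1 : HasFDerivAt (fun S : Matrix (Fin P₂) (Fin P₂) ℝ => Bᵀ * S⁻¹ * B)
        ((sandwichCLM Bᵀ B).comp (sandwichCLM (-(S₀⁻¹)) (S₀⁻¹))) S₀ :=
      (sandwichCLM Bᵀ B).hasFDerivAt.comp S₀ hInv
    exact h1.const_add M₀
  -- derivative of S ↦ (M₀ + Bᵀ S⁻¹ B)⁻¹
  set A : Matrix (Fin P) (Fin P) ℝ := M₀ + Bᵀ * S₀⁻¹ * B with hA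
  set LW : Matrix (Fin P₂) (Fin P₂) ℝ →L[ℝ] Matrix (Fin P) (Fin P) ℝ :=
    (sandwichCLM (-(A⁻¹)) (A⁻¹)).comp
      ((sandwichCLM Bᵀ B).comp (sandwichCLM (-(S₀⁻¹)) (S₀⁻¹))) with hLW
  have hW : HasFDerivAt (fun S : Matrix (Fin P₂) (Fin P₂) ℝ => (M₀ + Bᵀ * S⁻¹ * B)⁻¹)
      LW S₀ := (hasFDerivAt_matrix_inv A hM).comp S₀ hMder
  -- scalar functions
  set Lν : Matrix (Fin P₂) (Fin P₂) ℝ →L[ℝ] ℝ := (quadCLM x x).comp LW with hLν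
  set Lw : Matrix (Fin P₂) (Fin P₂) ℝ →L[ℝ] ℝ := (quadCLM x w).comp LW with hLw
  have hνf : HasFDerivAt
      (fun S : Matrix (Fin P₂) (Fin P₂) ℝ => x ⬝ᵥ (M₀ + Bᵀ * S⁻¹ * B)⁻¹ *ᵥ x) Lν S₀ :=
    (quadCLM x x).hasFDerivAt.comp S₀ hW
  have hwf : HasFDerivAt
      (fun S : Matrix (Fin P₂) (Fin P₂) ℝ => x ⬝ᵥ (M₀ + Bᵀ * S⁻¹ * B)⁻¹ *ᵥ w) Lw S₀ :=
    (quadCLM x w).hasFDerivAt.comp S₀ hW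
  -- value facts
  have hν0 : (x ⬝ᵥ (M₀ + Bᵀ * S₀⁻¹ * B)⁻¹ *ᵥ x) = ν := by rw [hν, hV₀]
  have hu0 : (1 : ℝ) - c * ν ≠ 0 := by linarith
  have hu0' : (1 : ℝ) - c * (x ⬝ᵥ (M₀ + Bᵀ * S₀⁻¹ * B)⁻¹ *ᵥ x) ≠ 0 := by rw [hν0]; exact hu0
  -- e and u
  have he : HasFDerivAt
      (fun S : Matrix (Fin P₂) (Fin P₂) ℝ =>
        (τ ^ 2)⁻¹ * (x ⬝ᵥ (M₀ + Bᵀ * S⁻¹ * B)⁻¹ *ᵥ w) - ybar)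
      (((τ ^ 2)⁻¹ : ℝ) • Lw) S₀ := (hwf.const_mul _).sub_const ybar
  have hu : HasFDerivAt
      (fun S : Matrix (Fin P₂) (Fin P₂) ℝ =>
        1 - c * (x ⬝ᵥ (M₀ + Bᵀ * S⁻¹ * B)⁻¹ *ᵥ x)) (-(c • Lν)) S₀ :=
    (hνf.const_mul c).const_sub 1
  -- term 1
  have hterm1 := (hu.log hu0').const_mul (-(1/2) : ℝ)
  -- term 2
  have hsq := (hasDerivAt_pow 2
      ((τ ^ 2)⁻¹ * (x ⬝ᵥ (M₀ + Bᵀ * S₀⁻¹ * B)⁻¹ *ᵥ w) - ybar)).comp_hasFDerivAt S₀ he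
  have hn := hsq.const_mul (c/2 : ℝ)
  have hui := (hasDerivAt_inv hu0').comp_hasFDerivAt S₀ hu
  have hterm2 := hn.mul hui
  refine ⟨_, (hterm1.add hterm2).congr_of_eventuallyEq ?_, ?_⟩
  · filter_upwards [] with S
    simp only [Pi.add_apply, Pi.mul_apply, Function.comp_apply, div_eq_mul_inv]
  · intro H
    have hKey : (sandwichCLM (-(A⁻¹)) (A⁻¹))
        ((sandwichCLM Bᵀ B) ((sandwichCLM (-(S₀⁻¹)) (S₀⁻¹)) H))
        = V₀ * Bᵀ * S₀⁻¹ * H * S₀⁻¹ * B * V₀ := by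
      simp [hV₀, Matrix.neg_mul, Matrix.mul_neg, Matrix.mul_assoc]
    show -(1/2 : ℝ) * ((1 - c * (x ⬝ᵥ (M₀ + Bᵀ * S₀⁻¹ * B)⁻¹ *ᵥ x))⁻¹ * -(c * Lν H)) +
      ((c / 2 * ((τ ^ 2)⁻¹ * (x ⬝ᵥ (M₀ + Bᵀ * S₀⁻¹ * B)⁻¹ *ᵥ w) - ybar) ^ 2) *
          (-((1 - c * (x ⬝ᵥ (M₀ + Bᵀ * S₀⁻¹ * B)⁻¹ *ᵥ x)) ^ 2)⁻¹ * -(c * Lν H)) +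
        (1 - c * (x ⬝ᵥ (M₀ + Bᵀ * S₀⁻¹ * B)⁻¹ *ᵥ x))⁻¹ * ((c / 2) *
          ((((2 : ℕ) : ℝ) * ((τ ^ 2)⁻¹ * (x ⬝ᵥ (M₀ + Bᵀ * S₀⁻¹ * B)⁻¹ *ᵥ w) - ybar) ^ (2 - 1)) *
            ((τ ^ 2)⁻¹ * Lw H)))) = _
    simp only [ContinuousLinearMap.add_apply, ContinuousLinearMap.coe_smul',
      Pi.smul_apply, ContinuousLinearMap.neg_apply, ContinuousLinearMap.smul_apply,
      hLν, hLw, ContinuousLinearMap.coe_comp', Function.comp_apply, hLW, smul_eq_mul]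
    rw [hKey]
    simp only [quadCLM_apply, hν0]
    rw [show (τ ^ 2)⁻¹ * (x ⬝ᵥ (M₀ + Bᵀ * S₀⁻¹ * B)⁻¹ *ᵥ w) - ybar = ebar by
      rw [heb, hyt, hV₀]]
    field_simp
    ring
end
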